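/- arXiv:math/0302320 — 2 statements merged into one kernel-verified Lean document; each statement's English description precedes it below -/
import Mathlib

section
/- For all integers $L \geq 0$ and $j$ with $|j| \leq L$, $\sum_{r=0,\ r\equiv j\ (\mathrm{mod}\ 2)}^{L} q^{r^2/2}(-q;q)_{L-r}\binom{L}{r}_{q^2}\binom{r}{(r-j)/2}_{q^2} = q^{j^2/2}\binom{2L}{L-j}_q$, as an identity of functions of $q$ (equivalently, after replacing $q$ by $q^2$ throughout, an identity of polynomials in $q$). -/
/- Positivity preserving q-binomial transformation (Lemma 1 of
Berkovich–Warnaar), stated after the substitution q → q²  so that it is a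
polynomial identity.  We work in the field of rational functions `RatFunc ℚ`
with `q = RatFunc.X`. -/

open Finset

noncomputable section

/-- The q-shifted factorial `(a; x)_n = ∏_{i=0}^{n-1} (1 - a xⁱ)`. -/
def qPoch {F : Type*} [Field F] (a x : F) (n : ℕ) : F :=
  ∏ i ∈ Finset.range n, (1 - a * x ^ i)

/-- The Gaussian binomial coefficient with base `x`, zero unless `0 ≤ k ≤ n`. -/
def qBinom {F : Type*} [Field F] (x : F) (n k : ℤ) : F :=
  if 0 ≤ k ∧ k ≤ n then
    qPoch x x n.toNat / (qPoch x x k.toNat * qPoch x x (n - k).toNat)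
  else 0

def q : RatFunc ℚ := RatFunc.X

lemma bw_q_pow_ne_one (n : ℕ) (hn : 1 ≤ n) : q ^ n ≠ 1 := by
  intro h
  have h2 : algebraMap (Polynomial ℚ) (RatFunc ℚ) (Polynomial.X ^ n) =
      algebraMap (Polynomial ℚ) (RatFunc ℚ) 1 := by
    simpa [q, map_pow, RatFunc.algebraMap_X] using h
  have h3 := RatFunc.algebraMap_injective ℚ h2
  have := congrArg Polynomial.natDegree h3
  simp [Polynomial.natDegree_X_pow] at this
  omega

lemma bw_q_ne_zero : q ≠ 0 := by simp [q, RatFunc.X_ne_zero]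

lemma bw_qPoch_succ {F : Type*} [Field F] (a x : F) (n : ℕ) :
    qPoch a x (n + 1) = qPoch a x n * (1 - a * x ^ n) := Finset.prod_range_succ _ _

lemma bw_qPoch_zero {F : Type*} [Field F] (a x : F) : qPoch a x 0 = 1 :=
  Finset.prod_range_zero _

lemma bw_qPoch_ne (x : RatFunc ℚ) (hx : ∀ m : ℕ, 1 ≤ m → x ^ m ≠ 1) (n : ℕ) :
    qPoch x x n ≠ 0 := by
  unfold qPoch
  apply Finset.prod_ne_zero_iff.mpr
  intro i _
  intro hc
  apply hx (i + 1) (by omega)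
  rw [pow_succ']
  have : x * x ^ i = 1 := by linear_combination -hc
  exact this

lemma bw_qBinom_eq (x : RatFunc ℚ) (n k : ℕ) (h : k ≤ n) :
    qBinom x n k = qPoch x x n / (qPoch x x k * qPoch x x (n - k)) := by
  unfold qBinom
  rw [if_pos (by omega)]
  have e1 : ((n : ℤ)).toNat = n := by omega
  have e2 : ((k : ℤ)).toNat = k := by omega
  have e3 : ((n : ℤ) - (k : ℤ)).toNat = n - k := by omega
  rw [e1, e2, e3]

lemma bw_qBinom_neg (x : RatFunc ℚ) {n k : ℤ} (hk : k < 0) : qBinom x n k = 0 := by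
  unfold qBinom; rw [if_neg (by omega)]

lemma bw_qBinom_gt (x : RatFunc ℚ) {n k : ℤ} (h : n < k) : qBinom x n k = 0 := by
  unfold qBinom; rw [if_neg (by omega)]

lemma bw_qBinom_zero (x : RatFunc ℚ) (hx : ∀ m : ℕ, 1 ≤ m → x ^ m ≠ 1) (n : ℕ) :
    qBinom x n 0 = 1 := by
  have := bw_qBinom_eq x n 0 (by omega)
  simp only [Nat.cast_zero] at this
  rw [this, bw_qPoch_zero, Nat.sub_zero, one_mul, div_self (bw_qPoch_ne x hx n)]

lemma bw_qBinom_self (x : RatFunc ℚ) (hx : ∀ m : ℕ, 1 ≤ m → x ^ m ≠ 1) (n : ℕ) :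
    qBinom x n n = 1 := by
  rw [bw_qBinom_eq x n n le_rfl, Nat.sub_self, bw_qPoch_zero, mul_one,
    div_self (bw_qPoch_ne x hx n)]

lemma bw_qBinom_symm (x : RatFunc ℚ) (n : ℕ) (k : ℤ) :
    qBinom x n k = qBinom x n ((n : ℤ) - k) := by
  unfold qBinom
  by_cases h : 0 ≤ k ∧ k ≤ (n : ℤ)
  · rw [if_pos h, if_pos (by omega)]
    have e1 : ((n : ℤ) - ((n : ℤ) - k)).toNat = k.toNat := by omega
    rw [e1, mul_comm]
  · rw [if_neg h, if_neg (by omega)]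

/-- absorption A : `(1 - x^(n+1-k)) [n, k-1] = (1 - x^k) [n, k]`. -/
lemma bw_lemA (x : RatFunc ℚ) (hx : ∀ m : ℕ, 1 ≤ m → x ^ m ≠ 1) (n k : ℕ)
    (hk : 1 ≤ k) :
    (1 - x ^ (n + 1 - k)) * qBinom x n ((k : ℤ) - 1)
      = (1 - x ^ k) * qBinom x n k := by
  rcases le_or_gt k n with hkn | hkn
  · obtain ⟨k', rfl⟩ : ∃ k', k = k' + 1 := ⟨k - 1, by omega⟩
    obtain ⟨d, rfl⟩ : ∃ d, n = k' + 1 + d := ⟨n - (k' + 1), by omega⟩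
    have e1 : ((k' + 1 : ℕ) : ℤ) - 1 = ((k' : ℕ) : ℤ) := by push_cast; ring
    rw [e1, bw_qBinom_eq x _ k' (by omega), bw_qBinom_eq x _ (k' + 1) (by omega)]
    have e2 : k' + 1 + d - k' = d + 1 := by omega
    have e3 : k' + 1 + d - (k' + 1) = d := by omega
    have e4 : k' + 1 + d + 1 - (k' + 1) = d + 1 := by omega
    rw [e2, e3, e4, bw_qPoch_succ x x d, bw_qPoch_succ x x k']
    have h1 := bw_qPoch_ne x hx k'
    have h2 := bw_qPoch_ne x hx d
    have h3 : (1 : RatFunc ℚ) - x * x ^ k' ≠ 0 := by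
      intro hc; exact hx (k' + 1) (by omega) (by rw [pow_succ']; linear_combination -hc)
    have h4 : (1 : RatFunc ℚ) - x * x ^ d ≠ 0 := by
      intro hc; exact hx (d + 1) (by omega) (by rw [pow_succ']; linear_combination -hc)
    field_simp
    ring
  · rcases eq_or_lt_of_le (by omega : n + 1 ≤ k) with h1 | h1
    · have e0 : n + 1 - k = 0 := by omega
      rw [e0, bw_qBinom_gt x (by omega : (n : ℤ) < k)]
      simp
    · rw [bw_qBinom_gt x (by omega : (n : ℤ) < (k : ℤ) - 1),
        bw_qBinom_gt x (by omega : (n : ℤ) < k)]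
      simp

/-- absorption B : `(1 - x^n) [n-1, k] = (1 - x^(n-k)) [n, k]`. -/
lemma bw_lemB (x : RatFunc ℚ) (hx : ∀ m : ℕ, 1 ≤ m → x ^ m ≠ 1) (n k : ℕ)
    (hn : 1 ≤ n) :
    (1 - x ^ n) * qBinom x ((n : ℤ) - 1) k
      = (1 - x ^ (n - k)) * qBinom x n k := by
  rcases lt_or_ge k n with hkn | hkn
  · obtain ⟨d, rfl⟩ : ∃ d, n = k + d + 1 := ⟨n - k - 1, by omega⟩
    have e1 : ((k + d + 1 : ℕ) : ℤ) - 1 = ((k + d : ℕ) : ℤ) := by push_cast; ring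
    rw [e1, bw_qBinom_eq x _ k (by omega), bw_qBinom_eq x _ k (by omega)]
    have e2 : k + d - k = d := by omega
    have e3 : k + d + 1 - k = d + 1 := by omega
    rw [e2, e3, bw_qPoch_succ x x d, bw_qPoch_succ x x (k + d)]
    have h1 := bw_qPoch_ne x hx k
    have h2 := bw_qPoch_ne x hx d
    have h3 : (1 : RatFunc ℚ) - x * x ^ d ≠ 0 := by
      intro hc; exact hx (d + 1) (by omega) (by rw [pow_succ']; linear_combination -hc)
    have h4 : (1 : RatFunc ℚ) - x * x ^ (k + d) ≠ 0 := by
      intro hc; exact hx (k + d + 1) (by omega) (by rw [pow_succ']; linear_combination -hc)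
    field_simp
    ring
  · rcases eq_or_lt_of_le hkn with h1 | h1
    · have e : n - k = 0 := by omega
      rw [e, bw_qBinom_gt x (by omega : (n : ℤ) - 1 < (k : ℤ))]
      simp
    · rw [bw_qBinom_gt x (by omega : (n : ℤ) - 1 < k), bw_qBinom_gt x (by omega : (n : ℤ) < k)]
      simp

-- appended to part1 content (within section)

lemma bw_hx4 : ∀ m : ℕ, 1 ≤ m → (q ^ 4) ^ m ≠ 1 := fun m hm => by
  rw [← pow_mul]; exact bw_q_pow_ne_one (4 * m) (by omega)

lemma bw_hx2 : ∀ m : ℕ, 1 ≤ m → (q ^ 2) ^ m ≠ 1 := fun m hm => by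
  rw [← pow_mul]; exact bw_q_pow_ne_one (2 * m) (by omega)

def Ssum (L : ℕ) (j : ℤ) : RatFunc ℚ :=
  ∑ r ∈ Finset.range (L + 1),
    (if (r : ℤ) % 2 = j % 2 then
      q ^ (r ^ 2) * qPoch (-(q ^ 2)) (q ^ 2) (L - r) *
        qBinom (q ^ 4) (L : ℤ) (r : ℤ) *
        qBinom (q ^ 4) (r : ℤ) (((r : ℤ) - j) / 2)
    else 0)

def Tfun (L : ℕ) (j : ℤ) : RatFunc ℚ :=
  q ^ (j ^ 2) * qBinom (q ^ 2) (2 * L : ℤ) ((L : ℤ) - j)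

def gg (L j : ℕ) (i : ℕ) : RatFunc ℚ :=
  if ((i : ℤ) - j) % 2 = 0 then
    q ^ (i ^ 2 + 2 * i + 2 * L + 1) * (1 - q ^ (2 * (L - i))) *
      qPoch (-(q ^ 2)) (q ^ 2) (L - i) * qBinom (q ^ 4) (L : ℤ) (i : ℤ) *
      qBinom (q ^ 4) (i : ℤ) (((i : ℤ) - j) / 2)
  else
    -(q ^ (i ^ 2 + 2 * i + 2 * L + 2 * j + 2) * (1 - q ^ (2 * (L - i))) *
      qPoch (-(q ^ 2)) (q ^ 2) (L - i) * qBinom (q ^ 4) (L : ℤ) (i : ℤ) *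
      qBinom (q ^ 4) (i : ℤ) (((i : ℤ) - j - 1) / 2))

def gcert (L j : ℕ) : ℕ → RatFunc ℚ
  | 0 => 0
  | (i + 1) => gg L j i

lemma bw_zpow_nat (t : ℕ) : q ^ ((t : ℤ)) = q ^ t := zpow_natCast q t

lemma bw_base (L : ℕ) : Ssum L L = Tfun L L := by
  have hT : Tfun L L = q ^ (L ^ 2) := by
    unfold Tfun
    rw [sub_self]
    have hc : (2 * (L : ℤ)) = (((2 * L : ℕ) : ℤ)) := by push_cast; ring
    rw [hc, bw_qBinom_zero (q ^ 2) bw_hx2 (2 * L), mul_one]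
    have : ((L : ℤ)) ^ 2 = (((L ^ 2 : ℕ) : ℤ)) := by push_cast; ring
    rw [this, bw_zpow_nat]
  rw [hT]
  unfold Ssum
  rw [Finset.sum_eq_single_of_mem L (Finset.self_mem_range_succ L)]
  · rw [if_pos rfl, sub_self, Nat.sub_self, bw_qPoch_zero,
      Int.zero_ediv, bw_qBinom_zero (q ^ 4) bw_hx4 L]
    have : qBinom (q ^ 4) (L : ℤ) (L : ℤ) = 1 := bw_qBinom_self (q ^ 4) bw_hx4 L
    rw [this]; ring
  · intro b hb hbL
    by_cases hp : (b : ℤ) % 2 = (L : ℤ) % 2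
    · rw [if_pos hp]
      have hbL' : b < L := by
        have := Finset.mem_range.mp hb; omega
      have : qBinom (q ^ 4) (b : ℤ) (((b : ℤ) - L) / 2) = 0 :=
        bw_qBinom_neg (q ^ 4) (by omega)
      rw [this, mul_zero]
    · rw [if_neg hp]

lemma bw_step (L j d : ℕ) (hL : L = j + d + 1) (r : ℕ) (hr : r < L + 1) :
    q ^ (2 * L) * (q ^ (2 * L + 2 * j + 2) - 1) *
      (if (r : ℤ) % 2 = ((j : ℤ) + 1) % 2 then
        q ^ (r ^ 2) * qPoch (-(q ^ 2)) (q ^ 2) (L - r) *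
          qBinom (q ^ 4) (L : ℤ) (r : ℤ) *
          qBinom (q ^ 4) (r : ℤ) (((r : ℤ) - ((j : ℤ) + 1)) / 2)
      else 0)
    - q ^ (2 * L + 2 * j + 1) * (q ^ (2 * (d + 1)) - 1) *
      (if (r : ℤ) % 2 = (j : ℤ) % 2 then
        q ^ (r ^ 2) * qPoch (-(q ^ 2)) (q ^ 2) (L - r) *
          qBinom (q ^ 4) (L : ℤ) (r : ℤ) *
          qBinom (q ^ 4) (r : ℤ) (((r : ℤ) - (j : ℤ)) / 2)
      else 0)
    = gcert L j (r + 1) - gcert L j r := by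
  have hg1 : gcert L j (r + 1) = gg L j r := rfl
  rw [hg1]
  by_cases hpar : ((r : ℤ) - (j : ℤ)) % 2 = 0
  · -- Case A : r ≡ j (mod 2)
    have hp0 : (r : ℤ) % 2 = (j : ℤ) % 2 := by omega
    have hp1 : ¬((r : ℤ) % 2 = ((j : ℤ) + 1) % 2) := by omega
    rw [if_neg hp1, if_pos hp0, mul_zero, zero_sub]
    rcases lt_or_ge (r : ℤ) (j : ℤ) with hrj | hrj
    · -- everything vanishes
      have hz1 : qBinom (q ^ 4) (r : ℤ) (((r : ℤ) - (j : ℤ)) / 2) = 0 :=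
        bw_qBinom_neg _ (by omega)
      have hz2 : gg L j r = 0 := by
        unfold gg; rw [if_pos hpar, hz1, mul_zero]
      have hz3 : gcert L j r = 0 := by
        cases r with
        | zero => rfl
        | succ r' =>
          show gg L j r' = 0
          unfold gg
          rw [if_neg (by push_cast at hpar ⊢; omega)]
          have hz : qBinom (q ^ 4) (r' : ℤ) (((r' : ℤ) - (j : ℤ) - 1) / 2) = 0 :=
            bw_qBinom_neg _ (by push_cast at hpar hrj ⊢; omega)
          rw [hz, mul_zero, neg_zero]
      rw [hz1, hz2, hz3, mul_zero, mul_zero, neg_zero, sub_zero]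
    · -- main case A
      obtain ⟨m, hm⟩ : ∃ m : ℕ, (r : ℤ) = (j : ℤ) + 2 * m :=
        ⟨((r : ℤ) - j).toNat / 2, by omega⟩
      obtain ⟨n, hn⟩ : ∃ n : ℕ, L = r + n := ⟨L - r, by omega⟩
      have hidx : ((r : ℤ) - (j : ℤ)) / 2 = (m : ℤ) := by omega
      have hLr : L - r = n := by omega
      rw [hidx, hLr]
      have hggr : gg L j r = q ^ (r ^ 2 + 2 * r + 2 * L + 1) * (1 - q ^ (2 * n)) *
          qPoch (-(q ^ 2)) (q ^ 2) n * qBinom (q ^ 4) (L : ℤ) (r : ℤ) *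
          qBinom (q ^ 4) (r : ℤ) (m : ℤ) := by
        unfold gg; rw [if_pos hpar, hidx, hLr]
      rw [hggr]
      cases r with
      | zero =>
        have hj0 : j = 0 := by omega
        have hm0 : m = 0 := by omega
        subst hj0; subst hm0
        have hnL : n = L := by omega
        subst hnL
        have hd : 2 * (d + 1) = 2 * n := by omega
        rw [hd, show gcert n 0 0 = 0 from rfl]
        push_cast
        ring
      | succ r' =>
        have hg2 : gcert L j (r' + 1) = gg L j r' := rfl
        have hparB : ¬(((r' : ℤ) - (j : ℤ)) % 2 = 0) := by push_cast at hpar ⊢; omega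
        have hLr' : L - r' = n + 1 := by omega
        have hidx' : ((r' : ℤ) - (j : ℤ) - 1) / 2 = (m : ℤ) - 1 := by
          push_cast at hm ⊢; omega
        have hggr' : gg L j r' = -(q ^ (r' ^ 2 + 2 * r' + 2 * L + 2 * j + 2) *
            (1 - q ^ (2 * (n + 1))) *
            qPoch (-(q ^ 2)) (q ^ 2) (n + 1) * qBinom (q ^ 4) (L : ℤ) (r' : ℤ) *
            qBinom (q ^ 4) (r' : ℤ) ((m : ℤ) - 1)) := by
          unfold gg; rw [if_neg hparB, hLr', hidx']
        rw [hg2, hggr']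
        rcases Nat.eq_zero_or_pos m with hm0 | hmpos
        · subst hm0
          have hz : qBinom (q ^ 4) (r' : ℤ) (((0 : ℕ) : ℤ) - 1) = 0 :=
            bw_qBinom_neg _ (by omega)
          rw [hz, mul_zero, neg_zero, sub_zero]
          have hjr : j = r' + 1 := by omega
          subst hjr
          have hnd : n = d + 1 := by omega
          subst hnd
          have hLv : L = r' + 1 + (d + 1) := by omega
          subst hLv
          push_cast
          ring
        · obtain ⟨m', rfl⟩ : ∃ m', m = m' + 1 := ⟨m - 1, by omega⟩
          have hr'v : r' = j + 2 * m' + 1 := by omega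
          subst hr'v
          have hLv : L = (j + 2 * m' + 1) + 1 + n := by omega
          subst hLv
          have hd : 2 * (d + 1) = 4 * m' + 2 * n + 4 := by omega
          rw [hd]
          -- absorption lemmas
          have hA := bw_lemA (q ^ 4) bw_hx4 ((j + 2 * m' + 1) + 1 + n)
            (j + 2 * m' + 1 + 1) (by omega)
          rw [show (j + 2 * m' + 1) + 1 + n + 1 - (j + 2 * m' + 1 + 1) = n + 1 by omega,
            show ((j + 2 * m' + 1 + 1 : ℕ) : ℤ) - 1 = ((j + 2 * m' + 1 : ℕ) : ℤ) by
              push_cast; ring] at hA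
          have hB := bw_lemB (q ^ 4) bw_hx4 (j + 2 * m' + 1 + 1) m' (by omega)
          rw [show ((j + 2 * m' + 1 + 1 : ℕ) : ℤ) - 1 = ((j + 2 * m' + 1 : ℕ) : ℤ) by
              push_cast; ring,
            show j + 2 * m' + 1 + 1 - m' = j + m' + 2 by omega] at hB
          have hC := bw_lemA (q ^ 4) bw_hx4 (j + 2 * m' + 1 + 1) (m' + 1) (by omega)
          rw [show j + 2 * m' + 1 + 1 + 1 - (m' + 1) = j + m' + 2 by omega,
            show ((m' + 1 : ℕ) : ℤ) - 1 = ((m' : ℕ) : ℤ) by push_cast; ring] at hC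
          have hP : qPoch (-(q ^ 2)) (q ^ 2) (n + 1)
              = qPoch (-(q ^ 2)) (q ^ 2) n * (1 + q ^ (2 * n + 2)) := by
            rw [bw_qPoch_succ]; congr 1; ring
          rw [hP]
          rw [show ((m' + 1 : ℕ) : ℤ) - 1 = ((m' : ℕ) : ℤ) by push_cast; ring]
          set P := qPoch (-(q ^ 2)) (q ^ 2) n with hPdef
          set X := qBinom (q ^ 4) (((j + 2 * m' + 1) + 1 + n : ℕ) : ℤ)
            ((j + 2 * m' + 1 + 1 : ℕ) : ℤ) with hXdef
          set X' := qBinom (q ^ 4) (((j + 2 * m' + 1) + 1 + n : ℕ) : ℤ)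
            ((j + 2 * m' + 1 : ℕ) : ℤ) with hX'def
          set Y := qBinom (q ^ 4) ((j + 2 * m' + 1 + 1 : ℕ) : ℤ) ((m' + 1 : ℕ) : ℤ) with hYdef
          set Z := qBinom (q ^ 4) ((j + 2 * m' + 1 : ℕ) : ℤ) ((m' : ℕ) : ℤ) with hZdef
          set W := qBinom (q ^ 4) ((j + 2 * m' + 1 + 1 : ℕ) : ℤ) ((m' : ℕ) : ℤ) with hWdef
          linear_combination
            (-(q ^ ((j + 2 * m' + 1) ^ 2 + 2 * (j + 2 * m' + 1) +
              2 * ((j + 2 * m' + 1) + 1 + n) + 2 * j + 2)) * P * Z) * hA +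
            (-(q ^ ((j + 2 * m' + 1) ^ 2 + 2 * (j + 2 * m' + 1) +
              2 * ((j + 2 * m' + 1) + 1 + n) + 2 * j + 2)) * P * X) * hB +
            (-(q ^ ((j + 2 * m' + 1) ^ 2 + 2 * (j + 2 * m' + 1) +
              2 * ((j + 2 * m' + 1) + 1 + n) + 2 * j + 2)) * P * X) * hC
  · -- Case B : r ≡ j + 1 (mod 2)
    have hp1 : (r : ℤ) % 2 = ((j : ℤ) + 1) % 2 := by omega
    have hp0 : ¬((r : ℤ) % 2 = (j : ℤ) % 2) := by omega
    rw [if_pos hp1, if_neg hp0, mul_zero, sub_zero]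
    rcases lt_or_ge (r : ℤ) ((j : ℤ) + 1) with hrj | hrj
    · -- everything vanishes
      have hz1 : qBinom (q ^ 4) (r : ℤ) (((r : ℤ) - ((j : ℤ) + 1)) / 2) = 0 :=
        bw_qBinom_neg _ (by omega)
      have hz2 : gg L j r = 0 := by
        unfold gg; rw [if_neg hpar]
        have hz : qBinom (q ^ 4) (r : ℤ) (((r : ℤ) - (j : ℤ) - 1) / 2) = 0 :=
          bw_qBinom_neg _ (by omega)
        rw [hz, mul_zero, neg_zero]
      have hz3 : gcert L j r = 0 := by
        cases r with
        | zero => rfl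
        | succ r' =>
          show gg L j r' = 0
          unfold gg
          rw [if_pos (by push_cast at hpar ⊢; omega)]
          have hz : qBinom (q ^ 4) (r' : ℤ) (((r' : ℤ) - (j : ℤ)) / 2) = 0 :=
            bw_qBinom_neg _ (by push_cast at hpar hrj ⊢; omega)
          rw [hz, mul_zero]
      rw [hz1, hz2, hz3, mul_zero, mul_zero, sub_zero]
    · -- main case B
      obtain ⟨a, ha⟩ : ∃ a : ℕ, (r : ℤ) = (j : ℤ) + 2 * a + 1 :=
        ⟨((r : ℤ) - j - 1).toNat / 2, by omega⟩
      obtain ⟨n, hn⟩ : ∃ n : ℕ, L = r + n := ⟨L - r, by omega⟩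
      have hidx : ((r : ℤ) - ((j : ℤ) + 1)) / 2 = (a : ℤ) := by omega
      have hLr : L - r = n := by omega
      rw [hidx, hLr]
      have hggr : gg L j r = -(q ^ (r ^ 2 + 2 * r + 2 * L + 2 * j + 2) *
          (1 - q ^ (2 * n)) *
          qPoch (-(q ^ 2)) (q ^ 2) n * qBinom (q ^ 4) (L : ℤ) (r : ℤ) *
          qBinom (q ^ 4) (r : ℤ) (a : ℤ)) := by
        unfold gg; rw [if_neg hpar, hLr]
        have : ((r : ℤ) - (j : ℤ) - 1) / 2 = (a : ℤ) := by omega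
        rw [this]
      rw [hggr]
      cases r with
      | zero => exfalso; push_cast at ha; omega
      | succ r' =>
        have hg2 : gcert L j (r' + 1) = gg L j r' := rfl
        have hparA : ((r' : ℤ) - (j : ℤ)) % 2 = 0 := by push_cast at hpar ⊢; omega
        have hLr' : L - r' = n + 1 := by omega
        have hidx' : ((r' : ℤ) - (j : ℤ)) / 2 = (a : ℤ) := by push_cast at ha ⊢; omega
        have hggr' : gg L j r' = q ^ (r' ^ 2 + 2 * r' + 2 * L + 1) *
            (1 - q ^ (2 * (n + 1))) *
            qPoch (-(q ^ 2)) (q ^ 2) (n + 1) * qBinom (q ^ 4) (L : ℤ) (r' : ℤ) *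
            qBinom (q ^ 4) (r' : ℤ) (a : ℤ) := by
          unfold gg; rw [if_pos hparA, hidx', hLr']
        rw [hg2, hggr']
        have hr'v : r' = j + 2 * a := by omega
        subst hr'v
        have hLv : L = (j + 2 * a) + 1 + n := by omega
        subst hLv
        have hA := bw_lemA (q ^ 4) bw_hx4 ((j + 2 * a) + 1 + n) (j + 2 * a + 1) (by omega)
        rw [show (j + 2 * a) + 1 + n + 1 - (j + 2 * a + 1) = n + 1 by omega,
          show ((j + 2 * a + 1 : ℕ) : ℤ) - 1 = ((j + 2 * a : ℕ) : ℤ) by push_cast; ring] at hA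
        have hB := bw_lemB (q ^ 4) bw_hx4 (j + 2 * a + 1) a (by omega)
        rw [show ((j + 2 * a + 1 : ℕ) : ℤ) - 1 = ((j + 2 * a : ℕ) : ℤ) by push_cast; ring,
          show j + 2 * a + 1 - a = j + a + 1 by omega] at hB
        have hP : qPoch (-(q ^ 2)) (q ^ 2) (n + 1)
            = qPoch (-(q ^ 2)) (q ^ 2) n * (1 + q ^ (2 * n + 2)) := by
          rw [bw_qPoch_succ]; congr 1; ring
        rw [hP]
        set P := qPoch (-(q ^ 2)) (q ^ 2) n with hPdef
        set X := qBinom (q ^ 4) (((j + 2 * a) + 1 + n : ℕ) : ℤ) ((j + 2 * a + 1 : ℕ) : ℤ)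
          with hXdef
        set X' := qBinom (q ^ 4) (((j + 2 * a) + 1 + n : ℕ) : ℤ) ((j + 2 * a : ℕ) : ℤ)
          with hX'def
        set Ya := qBinom (q ^ 4) ((j + 2 * a + 1 : ℕ) : ℤ) ((a : ℕ) : ℤ) with hYadef
        set Za := qBinom (q ^ 4) ((j + 2 * a : ℕ) : ℤ) ((a : ℕ) : ℤ) with hZadef
        linear_combination
          (q ^ ((j + 2 * a) ^ 2 + 2 * (j + 2 * a) + 2 * ((j + 2 * a) + 1 + n) + 1) *
            P * Za) * hA +
          (q ^ ((j + 2 * a) ^ 2 + 2 * (j + 2 * a) + 2 * ((j + 2 * a) + 1 + n) + 1) *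
            P * X) * hB

lemma bw_CR_S (L j d : ℕ) (hL : L = j + d + 1) :
    q ^ (2 * L) * (q ^ (2 * L + 2 * j + 2) - 1) * Ssum L ((j : ℤ) + 1)
      = q ^ (2 * L + 2 * j + 1) * (q ^ (2 * (d + 1)) - 1) * Ssum L (j : ℤ) := by
  have h0 : q ^ (2 * L) * (q ^ (2 * L + 2 * j + 2) - 1) * Ssum L ((j : ℤ) + 1)
      - q ^ (2 * L + 2 * j + 1) * (q ^ (2 * (d + 1)) - 1) * Ssum L (j : ℤ)
      = ∑ r ∈ Finset.range (L + 1), (gcert L j (r + 1) - gcert L j r) := by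
    unfold Ssum
    rw [Finset.mul_sum, Finset.mul_sum, ← Finset.sum_sub_distrib]
    refine Finset.sum_congr rfl fun r hr => ?_
    exact bw_step L j d hL r (Finset.mem_range.mp hr)
  rw [Finset.sum_range_sub (gcert L j) (L + 1)] at h0
  have h1 : gcert L j (L + 1) = 0 := by
    show gg L j L = 0
    unfold gg
    rw [Nat.sub_self]
    split_ifs <;> simp
  have h2 : gcert L j 0 = 0 := rfl
  rw [h1, h2, sub_zero] at h0
  exact sub_eq_zero.mp h0

lemma bw_CR_T (L j d : ℕ) (hL : L = j + d + 1) :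
    q ^ (2 * L) * (q ^ (2 * L + 2 * j + 2) - 1) * Tfun L ((j : ℤ) + 1)
      = q ^ (2 * L + 2 * j + 1) * (q ^ (2 * (d + 1)) - 1) * Tfun L (j : ℤ) := by
  unfold Tfun
  have e1 : ((j : ℤ) + 1) ^ 2 = (((j + 1) ^ 2 : ℕ) : ℤ) := by push_cast; ring
  have e2 : ((j : ℤ)) ^ 2 = (((j ^ 2 : ℕ)) : ℤ) := by push_cast; ring
  rw [e1, e2, bw_zpow_nat, bw_zpow_nat]
  have e3 : (L : ℤ) - ((j : ℤ) + 1) = ((d : ℕ) : ℤ) := by omega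
  have e4 : (L : ℤ) - (j : ℤ) = ((d + 1 : ℕ) : ℤ) := by push_cast; omega
  rw [e3, e4]
  subst hL
  have hA := bw_lemA (q ^ 2) bw_hx2 (2 * (j + d + 1)) (d + 1) (by omega)
  rw [show ((d + 1 : ℕ) : ℤ) - 1 = ((d : ℕ) : ℤ) by push_cast; ring] at hA
  have e5 : (2 * ((j + d + 1 : ℕ) : ℤ)) = (((2 * (j + d + 1) : ℕ)) : ℤ) := by push_cast; ring
  rw [e5]
  rw [show 2 * (j + d + 1) + 1 - (d + 1) = 2 * j + d + 2 by omega] at hA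
  linear_combination (-(q ^ (2 * (j + d + 1) + 2 * j + 1 + j ^ 2))) * hA

lemma bw_keyS (L : ℕ) : ∀ d j : ℕ, j + d = L → Ssum L (j : ℤ) = Tfun L (j : ℤ) := by
  intro d
  induction d with
  | zero =>
    intro j hj
    have hjL : j = L := by omega
    rw [hjL]
    exact bw_base L
  | succ d ih =>
    intro j hj
    have hL : L = j + d + 1 := by omega
    have h1 := bw_CR_S L j d hL
    have h2 := bw_CR_T L j d hL
    have h3 : Ssum L ((j : ℤ) + 1) = Tfun L ((j : ℤ) + 1) := by
      have := ih (j + 1) (by omega)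
      push_cast at this
      exact this
    have h4 : q ^ (2 * L + 2 * j + 1) * (q ^ (2 * (d + 1)) - 1) * Ssum L (j : ℤ)
        = q ^ (2 * L + 2 * j + 1) * (q ^ (2 * (d + 1)) - 1) * Tfun L (j : ℤ) := by
      rw [← h1, ← h2, h3]
    have h5 : q ^ (2 * L + 2 * j + 1) * (q ^ (2 * (d + 1)) - 1) ≠ 0 := by
      apply mul_ne_zero
      · exact pow_ne_zero _ bw_q_ne_zero
      · intro hc
        exact bw_q_pow_ne_one (2 * (d + 1)) (by omega) (by linear_combination hc)
    exact mul_left_cancel₀ h5 h4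

lemma bw_Ssum_neg (L : ℕ) (j : ℤ) : Ssum L (-j) = Ssum L j := by
  unfold Ssum
  refine Finset.sum_congr rfl fun r hr => ?_
  have hp : (-j) % 2 = j % 2 ↔ True := by
    constructor
    · intro; trivial
    · intro; omega
  by_cases h : (r : ℤ) % 2 = j % 2
  · rw [if_pos h, if_pos (by omega)]
    have h2 : (2 : ℤ) ∣ ((r : ℤ) - j) := by omega
    have e1 : ((r : ℤ) - (-j)) / 2 = (r : ℤ) - (((r : ℤ) - j) / 2) := by omega
    rw [e1, ← bw_qBinom_symm (q ^ 4) r (((r : ℤ) - j) / 2)]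
  · rw [if_neg h, if_neg (by omega)]

lemma bw_Tfun_neg (L : ℕ) (j : ℤ) : Tfun L (-j) = Tfun L j := by
  unfold Tfun
  have e1 : (-j) ^ 2 = j ^ 2 := by ring
  rw [e1]
  have e2 : (L : ℤ) - (-j) = ((2 * L : ℕ) : ℤ) - ((L : ℤ) - j) := by push_cast; ring
  rw [show (2 * (L : ℤ)) = ((2 * L : ℕ) : ℤ) by push_cast; ring, e2,
    ← bw_qBinom_symm (q ^ 2) (2 * L) ((L : ℤ) - j)]

theorem stmt0 (L : ℕ) (j : ℤ) (hj : |j| ≤ (L : ℤ)) :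
    ∑ r ∈ Finset.range (L + 1),
      (if (r : ℤ) % 2 = j % 2 then
        q ^ (r ^ 2) * qPoch (-(q ^ 2)) (q ^ 2) (L - r) *
          qBinom (q ^ 4) (L : ℤ) (r : ℤ) *
          qBinom (q ^ 4) (r : ℤ) (((r : ℤ) - j) / 2)
      else 0)
    = q ^ (j ^ 2) * qBinom (q ^ 2) (2 * L : ℤ) ((L : ℤ) - j) := by
  have main : ∀ (j' : ℤ), |j'| ≤ (L : ℤ) → Ssum L j' = Tfun L j' := by
    intro j' hj'
    rcases le_or_gt 0 j' with h0 | h0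
    · obtain ⟨jn, rfl⟩ := Int.eq_ofNat_of_zero_le h0
      have hle : (jn : ℤ) ≤ (L : ℤ) := (abs_le.mp hj').2
      exact bw_keyS L (L - jn) jn (by omega)
    · have hs := bw_Ssum_neg L (-j')
      rw [neg_neg] at hs
      have ht := bw_Tfun_neg L (-j')
      rw [neg_neg] at ht
      rw [hs, ht]
      obtain ⟨jn, hjn⟩ := Int.eq_ofNat_of_zero_le (by omega : (0 : ℤ) ≤ -j')
      rw [hjn]
      obtain ⟨ha, hb⟩ := abs_le.mp hj'
      exact bw_keyS L (L - jn) jn (by omega)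
  exact main j hj

end
end

section
/- For all integers $L \geq 0$ and $j$: $\sum_{r=0}^{L}(-1)^{r+L}(-q;q^2)_{L-r}\binom{L}{r}_{q^2}\binom{2r}{r-j}_q = \binom{L}{(L-j)/2}_{q^4}\,\chi(L \equiv j \bmod 2)$, a polynomial identity in $q$. -/
open Finset

noncomputable section

abbrev K := RatFunc ℚ

lemma hq0 : (q : K) ≠ 0 := RatFunc.X_ne_zero

lemma q_pow_ne_C (m : ℕ) (hm : m ≠ 0) (c : ℚ) : (q : K) ^ m ≠ (c : K) := by
  intro h
  have hX : (q : K) = algebraMap (Polynomial ℚ) K Polynomial.X := rfl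
  rw [hX, ← map_pow] at h
  have hc : ((c : K)) = algebraMap (Polynomial ℚ) K (Polynomial.C c) := by
    simp [RatFunc.algebraMap_C]
  rw [hc] at h
  have := RatFunc.algebraMap_injective (K := ℚ) h
  have h1 : (Polynomial.X ^ m : Polynomial ℚ).natDegree = m := Polynomial.natDegree_X_pow m
  rw [this] at h1
  simp [Polynomial.natDegree_C] at h1
  exact hm h1.symm

lemma q_pow_ne_one (m : ℕ) (hm : m ≠ 0) : (q : K) ^ m ≠ 1 := by
  have := q_pow_ne_C m hm 1
  simpa using this

lemma q_pow_ne_neg_one (m : ℕ) (hm : m ≠ 0) : (q : K) ^ m ≠ -1 := by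
  have := q_pow_ne_C m hm (-1)
  simpa using this



section generic
variable {F : Type*} [Field F] (x : F)

lemma qPoch_zero (a : F) : qPoch a x 0 = 1 := by simp [qPoch]

lemma qPoch_succ (a : F) (n : ℕ) : qPoch a x (n + 1) = qPoch a x n * (1 - a * x ^ n) := by
  simp [qPoch, Finset.prod_range_succ]

variable (hx : ∀ m : ℕ, m ≠ 0 → x ^ m ≠ 1)

include hx in
lemma qPoch_xx_ne (n : ℕ) : qPoch x x n ≠ 0 := by
  rw [qPoch]
  apply Finset.prod_ne_zero_iff.mpr
  intro i _
  rw [sub_ne_zero]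
  intro h
  exact hx (i + 1) (Nat.succ_ne_zero i) (by rw [pow_succ']; exact h.symm)

lemma qBinom_neg {k : ℤ} (n : ℤ) (hk : k < 0) : qBinom x n k = 0 := by
  rw [qBinom, if_neg]; omega

lemma qBinom_gt {n k : ℤ} (hk : n < k) : qBinom x n k = 0 := by
  rw [qBinom, if_neg]; omega

lemma qBinom_neg_n {n : ℤ} (k : ℤ) (hn : n < 0) : qBinom x n k = 0 := by
  rw [qBinom, if_neg]; omega

lemma qBinom_ratio (n k : ℕ) (hk : k ≤ n) :
    qBinom x (n : ℤ) (k : ℤ) = qPoch x x n / (qPoch x x k * qPoch x x (n - k)) := by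
  rw [qBinom, if_pos ⟨Int.natCast_nonneg k, by exact_mod_cast hk⟩]
  rw [Int.toNat_natCast, Int.toNat_natCast, show ((n:ℤ) - (k:ℤ)).toNat = n - k by omega]

include hx in
lemma qBinom_zero (n : ℤ) (hn : 0 ≤ n) : qBinom x n 0 = 1 := by
  obtain ⟨m, rfl⟩ := Int.eq_ofNat_of_zero_le hn
  rw [show (0 : ℤ) = ((0 : ℕ) : ℤ) from rfl, qBinom_ratio x m 0 (Nat.zero_le m)]
  rw [qPoch_zero, Nat.sub_zero, one_mul, div_self (qPoch_xx_ne x hx m)]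

include hx in
lemma qBinom_self (n : ℕ) : qBinom x (n : ℤ) (n : ℤ) = 1 := by
  rw [qBinom_ratio x n n le_rfl, Nat.sub_self, qPoch_zero, mul_one,
    div_self (qPoch_xx_ne x hx n)]

end generic

section pascal
variable {F : Type*} [Field F] (x : F) (hx : ∀ m : ℕ, m ≠ 0 → x ^ m ≠ 1)

include hx in
lemma pascal1 (n : ℕ) (k : ℤ) :
    qBinom x ((n : ℤ) + 1) k = qBinom x n (k - 1) + x ^ k * qBinom x n k := by
  rcases lt_trichotomy k 0 with hk | hk | hk
  · rw [qBinom_neg x _ hk, qBinom_neg x _ (by omega : k - 1 < 0), qBinom_neg x _ hk]; ring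
  · subst hk
    rw [show ((n : ℤ) + 1) = ((n + 1 : ℕ) : ℤ) by push_cast; ring,
      qBinom_zero x hx _ (by positivity), qBinom_zero x hx _ (by positivity),
      qBinom_neg x _ (by omega : (0:ℤ) - 1 < 0)]
    simp
  · obtain ⟨a, rfl⟩ : ∃ a : ℕ, k = (a : ℤ) + 1 := ⟨(k - 1).toNat, by omega⟩
    rcases lt_trichotomy ((a : ℤ) + 1) ((n : ℤ) + 1) with h | h | h
    · -- interior : a + 1 ≤ n
      have ha : a + 1 ≤ n := by omega
      obtain ⟨b, rfl⟩ : ∃ b : ℕ, n = a + 1 + b := ⟨n - (a + 1), by omega⟩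
      rw [show ((a:ℤ) + 1) - 1 = ((a : ℕ) : ℤ) by ring,
        show ((a:ℤ) + 1) = ((a + 1 : ℕ) : ℤ) by push_cast; ring,
        show ((a + 1 + b : ℕ) : ℤ) + 1 = ((a + 1 + b + 1 : ℕ) : ℤ) by push_cast; ring,
        qBinom_ratio x (a+1+b+1) (a+1) (by omega),
        qBinom_ratio x (a+1+b) a (by omega),
        qBinom_ratio x (a+1+b) (a+1) (by omega),
        show a+1+b+1 - (a+1) = b+1 by omega,
        show a+1+b - a = b+1 by omega,
        show a+1+b - (a+1) = b by omega,
        zpow_natCast,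
        show a+1+b+1 = (a+1+b)+1 by ring]
      rw [qPoch_succ x x (a+1+b), qPoch_succ x x a, qPoch_succ x x b]
      have h1 := qPoch_xx_ne x hx a
      have h2 := qPoch_xx_ne x hx b
      have h3 := qPoch_xx_ne x hx (a+1+b)
      have h4 : (1 : F) - x * x ^ a ≠ 0 := by
        rw [sub_ne_zero]; intro hh
        exact hx (a+1) (Nat.succ_ne_zero a) (by rw [pow_succ']; exact hh.symm)
      have h5 : (1 : F) - x * x ^ b ≠ 0 := by
        rw [sub_ne_zero]; intro hh
        exact hx (b+1) (Nat.succ_ne_zero b) (by rw [pow_succ']; exact hh.symm)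
      field_simp
      ring
    · -- k = n + 1
      have ha : a = n := by omega
      subst ha
      rw [show ((a:ℤ) + 1) = ((a + 1 : ℕ) : ℤ) by push_cast; ring,
        qBinom_self x hx (a+1), show ((a+1:ℕ):ℤ) - 1 = ((a:ℕ):ℤ) by push_cast; ring,
        qBinom_self x hx a, qBinom_gt x (by exact_mod_cast Nat.lt_succ_self a)]
      ring
    · -- k > n + 1
      rw [qBinom_gt x h, qBinom_gt x (by omega : (n:ℤ) < (a:ℤ) + 1 - 1),
        qBinom_gt x (by omega : (n:ℤ) < (a:ℤ) + 1)]
      ring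

end pascal

section pascal2
variable {F : Type*} [Field F] (x : F) (hx : ∀ m : ℕ, m ≠ 0 → x ^ m ≠ 1)

include hx in
lemma pascal2 (n : ℕ) (k : ℤ) :
    qBinom x ((n : ℤ) + 1) k = x ^ ((n : ℤ) + 1 - k) * qBinom x n (k - 1) + qBinom x n k := by
  rcases lt_trichotomy k 0 with hk | hk | hk
  · rw [qBinom_neg x _ hk, qBinom_neg x _ (by omega : k - 1 < 0), qBinom_neg x _ hk]; ring
  · subst hk
    rw [show ((n : ℤ) + 1) = ((n + 1 : ℕ) : ℤ) by push_cast; ring,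
      qBinom_zero x hx _ (by positivity), qBinom_zero x hx _ (by positivity),
      qBinom_neg x _ (by omega : (0:ℤ) - 1 < 0)]
    ring
  · obtain ⟨a, rfl⟩ : ∃ a : ℕ, k = (a : ℤ) + 1 := ⟨(k - 1).toNat, by omega⟩
    rcases lt_trichotomy ((a : ℤ) + 1) ((n : ℤ) + 1) with h | h | h
    · have ha : a + 1 ≤ n := by omega
      obtain ⟨b, rfl⟩ : ∃ b : ℕ, n = a + 1 + b := ⟨n - (a + 1), by omega⟩
      rw [show ((a:ℤ) + 1) - 1 = ((a : ℕ) : ℤ) by ring,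
        show ((a + 1 + b : ℕ) : ℤ) + 1 - ((a:ℤ)+1) = ((b + 1 : ℕ) : ℤ) by push_cast; ring,
        show ((a:ℤ) + 1) = ((a + 1 : ℕ) : ℤ) by push_cast; ring,
        show ((a + 1 + b : ℕ) : ℤ) + 1 = ((a + 1 + b + 1 : ℕ) : ℤ) by push_cast; ring,
        qBinom_ratio x (a+1+b+1) (a+1) (by omega),
        qBinom_ratio x (a+1+b) a (by omega),
        qBinom_ratio x (a+1+b) (a+1) (by omega),
        show a+1+b+1 - (a+1) = b+1 by omega,
        show a+1+b - a = b+1 by omega,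
        show a+1+b - (a+1) = b by omega,
        zpow_natCast,
        show a+1+b+1 = (a+1+b)+1 by ring]
      rw [qPoch_succ x x (a+1+b), qPoch_succ x x a, qPoch_succ x x b]
      have h1 := qPoch_xx_ne x hx a
      have h2 := qPoch_xx_ne x hx b
      have h3 := qPoch_xx_ne x hx (a+1+b)
      have h4 : (1 : F) - x * x ^ a ≠ 0 := by
        rw [sub_ne_zero]; intro hh
        exact hx (a+1) (Nat.succ_ne_zero a) (by rw [pow_succ']; exact hh.symm)
      have h5 : (1 : F) - x * x ^ b ≠ 0 := by
        rw [sub_ne_zero]; intro hh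
        exact hx (b+1) (Nat.succ_ne_zero b) (by rw [pow_succ']; exact hh.symm)
      field_simp
      ring
    · have ha : a = n := by omega
      subst ha
      rw [show ((a:ℤ) + 1) = ((a + 1 : ℕ) : ℤ) by push_cast; ring,
        qBinom_self x hx (a+1), show ((a+1:ℕ):ℤ) - 1 = ((a:ℕ):ℤ) by push_cast; ring,
        qBinom_self x hx a, qBinom_gt x (by exact_mod_cast Nat.lt_succ_self a),
        show ((a+1:ℕ):ℤ) - ((a+1:ℕ):ℤ) = 0 by ring]
      simp
    · rw [qBinom_gt x h, qBinom_gt x (by omega : (n:ℤ) < (a:ℤ) + 1 - 1),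
        qBinom_gt x (by omega : (n:ℤ) < (a:ℤ) + 1)]
      ring

include hx in
lemma qshift (n : ℕ) (k : ℤ) :
    (1 - x ^ k) * qBinom x n k = (1 - x ^ ((n : ℤ) - k + 1)) * qBinom x n (k - 1) := by
  rcases lt_trichotomy k 0 with hk | hk | hk
  · rw [qBinom_neg x _ hk, qBinom_neg x _ (by omega : k - 1 < 0)]; ring
  · subst hk
    rw [qBinom_neg x _ (by omega : (0:ℤ) - 1 < 0)]
    simp
  · obtain ⟨a, rfl⟩ : ∃ a : ℕ, k = (a : ℤ) + 1 := ⟨(k - 1).toNat, by omega⟩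
    rcases lt_trichotomy ((a : ℤ) + 1) ((n : ℤ) + 1) with h | h | h
    · have ha : a + 1 ≤ n := by omega
      obtain ⟨b, rfl⟩ : ∃ b : ℕ, n = a + 1 + b := ⟨n - (a + 1), by omega⟩
      rw [show ((a:ℤ) + 1) - 1 = ((a : ℕ) : ℤ) by ring,
        show ((a + 1 + b : ℕ) : ℤ) - ((a:ℤ)+1) + 1 = ((b + 1 : ℕ) : ℤ) by push_cast; ring,
        show ((a:ℤ) + 1) = ((a + 1 : ℕ) : ℤ) by push_cast; ring,
        qBinom_ratio x (a+1+b) a (by omega),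
        qBinom_ratio x (a+1+b) (a+1) (by omega),
        show a+1+b - a = b+1 by omega,
        show a+1+b - (a+1) = b by omega,
        zpow_natCast, zpow_natCast]
      rw [qPoch_succ x x a, qPoch_succ x x b]
      have h1 := qPoch_xx_ne x hx a
      have h2 := qPoch_xx_ne x hx b
      have h3 := qPoch_xx_ne x hx (a+1+b)
      have h4 : (1 : F) - x * x ^ a ≠ 0 := by
        rw [sub_ne_zero]; intro hh
        exact hx (a+1) (Nat.succ_ne_zero a) (by rw [pow_succ']; exact hh.symm)
      have h5 : (1 : F) - x * x ^ b ≠ 0 := by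
        rw [sub_ne_zero]; intro hh
        exact hx (b+1) (Nat.succ_ne_zero b) (by rw [pow_succ']; exact hh.symm)
      field_simp
      ring
    · have ha : a = n := by omega
      subst ha
      rw [qBinom_gt x (by omega : (a:ℤ) < (a:ℤ) + 1),
        show ((a:ℤ) - ((a:ℤ)+1) + 1) = 0 by ring]
      simp
    · rw [qBinom_gt x (by omega : (n:ℤ) < (a:ℤ) + 1),
        qBinom_gt x (by omega : (n:ℤ) < (a:ℤ) + 1 - 1)]
      ring

end pascal2

lemma key {F : Type*} [Field F] (qq ζ η μ X X' Y Y' BA' : F)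
    (hζη : ζ * η ≠ 1) (hζ : ζ ≠ 1)
    (e5 : (1 - ζ * η) * X = (1 - μ) * X')
    (e6 : (1 - ζ) * Y = (1 - η) * Y') :
    (μ * X' + X) * ((μ - 1) * BA' + (ζ * μ * (1 + qq) - 1 - μ * qq) * (Y' + ζ * Y))
      + (1 - μ * ζ * η) * X * (BA' + ζ * (Y' + ζ * Y))
      + (1 - μ * ζ * η) * (1 + μ * qq) * X' * Y' = 0 := by
  have h1 : (1 : F) - ζ * η ≠ 0 := sub_ne_zero.mpr (Ne.symm hζη)
  have h2 : (1 : F) - ζ ≠ 0 := sub_ne_zero.mpr (Ne.symm hζ)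
  have hX : X = (1 - μ) * X' / (1 - ζ * η) := by
    rw [eq_div_iff h1]; linear_combination e5
  have hY : Y = (1 - η) * Y' / (1 - ζ) := by
    rw [eq_div_iff h2]; linear_combination e6
  rw [hX, hY]
  field_simp
  ring

lemma hxq : ∀ m : ℕ, m ≠ 0 → (q : K) ^ m ≠ 1 := fun m hm => q_pow_ne_one m hm

lemma hx2 : ∀ m : ℕ, m ≠ 0 → ((q : K) ^ 2) ^ m ≠ 1 := by
  intro m hm; rw [← pow_mul]; exact q_pow_ne_one _ (by positivity)

lemma hx4 : ∀ m : ℕ, m ≠ 0 → ((q : K) ^ 4) ^ m ≠ 1 := by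
  intro m hm; rw [← pow_mul]; exact q_pow_ne_one _ (by positivity)

lemma q_zpow_ne_one (t : ℤ) (ht : t ≠ 0) : (q : K) ^ t ≠ 1 := by
  rcases lt_trichotomy t 0 with h | h | h
  · intro hc
    have h1 : (q : K) ^ (-t) = 1 := by rw [zpow_neg, hc, inv_one]
    obtain ⟨m, hm⟩ : ∃ m : ℕ, -t = (m : ℤ) := ⟨(-t).toNat, by omega⟩
    rw [hm, zpow_natCast] at h1
    exact q_pow_ne_one m (by omega) h1
  · exact absurd h ht
  · obtain ⟨m, rfl⟩ : ∃ m : ℕ, t = (m : ℤ) := ⟨t.toNat, by omega⟩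
    rw [zpow_natCast]
    exact q_pow_ne_one m (by exact_mod_cast h.ne')

lemma Pp_ne (n : ℕ) : qPoch (-q) ((q:K) ^ 2) n ≠ 0 := by
  rw [qPoch]
  apply Finset.prod_ne_zero_iff.mpr
  intro i _
  intro h
  have h2 : (q:K) ^ (2*i+1) = -1 := by
    have : (1:K) + q * (q^2)^i = 0 := by linear_combination h
    rw [← pow_mul] at this
    linear_combination this
  exact q_pow_ne_neg_one (2*i+1) (by omega) h2

lemma LI (L r : ℕ) (hr : r ≤ L) (j : ℤ) :
    qBinom ((q:K)^2) (L:ℤ) (r:ℤ) *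
      (((q:K)^(2*(L-r)) - 1) * qBinom q (2*(r:ℤ)) ((r:ℤ)-j-1)
        + ((q:K)^((r:ℤ)-j) * (q:K)^(2*(L-r)) * (1+q) - 1 - (q:K)^(2*(L-r))*q) *
            qBinom q (2*(r:ℤ)) ((r:ℤ)-j))
    + (1 - (q:K)^(2*L)) * qBinom ((q:K)^2) ((L:ℤ)-1) (r:ℤ) * qBinom q (2*(r:ℤ)+1) ((r:ℤ)-j)
    + (1 - (q:K)^(2*L)) * (1 + (q:K)^(2*(L-r))*q) * qBinom ((q:K)^2) ((L:ℤ)-1) ((r:ℤ)-1) *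
        qBinom q (2*(r:ℤ)-1) ((r:ℤ)-j-1) = 0 := by
  rcases Nat.eq_zero_or_pos r with hr0 | hr1
  · -- r = 0
    subst hr0
    simp only [Nat.cast_zero, Nat.sub_zero, mul_zero, zero_sub, zero_mul, mul_one, zero_add]
    rcases Nat.eq_zero_or_pos L with hL0 | hL1
    · subst hL0
      simp only [Nat.cast_zero, Nat.mul_zero, mul_zero, pow_zero]
      rcases eq_or_ne j 0 with hj | hj
      · subst hj
        simp only [neg_zero, zpow_zero]
        rw [qBinom_zero q hxq 0 le_rfl]
        ring
      · rcases lt_or_gt_of_ne hj with hj' | hj'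
        · rw [qBinom_gt q (by omega : (0:ℤ) < -j)]
          ring
        · rw [qBinom_neg q _ (by omega : -j < 0)]
          ring
    · have h1 : qBinom ((q:K)^2) (L:ℤ) 0 = 1 := qBinom_zero _ hx2 _ (by positivity)
      have h2 : qBinom ((q:K)^2) ((L:ℤ)-1) 0 = 1 := qBinom_zero _ hx2 _ (by omega)
      have h3 : qBinom ((q:K)^2) ((L:ℤ)-1) (-1:ℤ) = 0 := qBinom_neg _ _ (by norm_num)
      rw [h1, h2, h3]
      rcases lt_trichotomy j 0 with hj | hj | hj
      · rcases eq_or_lt_of_le (by omega : j ≤ -1) with hj1 | hj1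
        · subst hj1
          norm_num
          have b1 : qBinom q (0:ℤ) (0:ℤ) = 1 := qBinom_zero q hxq 0 le_rfl
          have b2 : qBinom q (0:ℤ) (1:ℤ) = 0 := qBinom_gt q (by norm_num)
          have b3 : qBinom q (1:ℤ) (1:ℤ) = 1 := by
            have := qBinom_self q hxq 1; simpa using this
          rw [b1, b2, b3]
          ring
        · rw [qBinom_gt q (by omega : (0:ℤ) < -j-1),
            qBinom_gt q (by omega : (0:ℤ) < -j),
            qBinom_gt q (by omega : (1:ℤ) < -j)]
          ring
      · subst hj
        norm_num
        have b1 : qBinom q (0:ℤ) (0:ℤ) = 1 := qBinom_zero q hxq 0 le_rfl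
        have b2 : qBinom q (0:ℤ) (-1:ℤ) = 0 := qBinom_neg q _ (by norm_num)
        have b3 : qBinom q (1:ℤ) (0:ℤ) = 1 := qBinom_zero q hxq 1 (by norm_num)
        rw [b1, b2, b3]
        ring
      · rw [qBinom_neg q _ (by omega : -j-1 < 0), qBinom_neg q _ (by omega : -j < 0),
          qBinom_neg q _ (by omega : -j < 0)]
        ring
  · -- r ≥ 1
    obtain ⟨t, rfl⟩ : ∃ t, L = r + t := ⟨L - r, by omega⟩
    rw [show r + t - r = t from by omega]
    -- preliminaries
    have hA : (q:K)^((r:ℤ)-j) * (q:K)^((r:ℤ)+j) = (q:K)^(2*r) := by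
      rw [← zpow_add₀ hq0, show ((r:ℤ)-j) + ((r:ℤ)+j) = ((2*r:ℕ):ℤ) by push_cast; ring,
        zpow_natCast]
    have hc1 : ((q:K)^2)^((r:ℕ):ℤ) = (q:K)^(2*r) := by rw [zpow_natCast, ← pow_mul]
    have hc2 : ((q:K)^2)^((t:ℕ):ℤ) = (q:K)^(2*t) := by rw [zpow_natCast, ← pow_mul]
    -- e5
    have e5 := qshift ((q:K)^2) hx2 (r+t-1) (r:ℤ)
    rw [show ((r+t-1:ℕ):ℤ) = ((r+t:ℕ):ℤ)-1 by omega] at e5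
    rw [show ((r+t:ℕ):ℤ)-1 - (r:ℤ) + 1 = ((t:ℕ):ℤ) by omega] at e5
    rw [hc1, hc2] at e5
    -- h3
    have h3 := pascal2 ((q:K)^2) hx2 (r+t-1) (r:ℤ)
    rw [show ((r+t-1:ℕ):ℤ) = ((r+t:ℕ):ℤ)-1 by omega] at h3
    rw [show ((r+t:ℕ):ℤ)-1+1 = ((r+t:ℕ):ℤ) by ring] at h3
    rw [show ((r+t:ℕ):ℤ) - (r:ℤ) = ((t:ℕ):ℤ) by omega] at h3
    rw [hc2] at h3
    by_cases hj : j = (r:ℤ)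
    · -- j = r : reduces to absorption
      subst hj
      rw [show (r:ℤ) - (r:ℤ) - 1 = (-1:ℤ) by ring]
      rw [sub_self, zpow_zero]
      rw [qBinom_neg q _ (by norm_num : (-1:ℤ) < 0),
        qBinom_neg q _ (by norm_num : (-1:ℤ) < 0),
        qBinom_zero q hxq (2*(r:ℤ)) (by positivity),
        qBinom_zero q hxq (2*(r:ℤ)+1) (by positivity)]
      linear_combination ((q:K)^(2*t) - 1) * h3 + (q:K)^(2*t) * e5
    · -- generic case
      -- e6
      have e6 := qshift q hxq (2*r-1) ((r:ℤ)-j)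
      rw [show ((2*r-1:ℕ):ℤ) = 2*(r:ℤ)-1 by omega] at e6
      rw [show 2*(r:ℤ)-1 - ((r:ℤ)-j) + 1 = (r:ℤ)+j by ring] at e6
      -- h2
      have h2 := pascal1 q hxq (2*r) ((r:ℤ)-j)
      rw [show ((2*r:ℕ):ℤ) = 2*(r:ℤ) by push_cast; ring] at h2
      -- h4
      have h4 := pascal1 q hxq (2*r-1) ((r:ℤ)-j)
      rw [show ((2*r-1:ℕ):ℤ) = 2*(r:ℤ)-1 by omega] at h4
      rw [show 2*(r:ℤ)-1+1 = 2*(r:ℤ) by ring] at h4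
      -- nonvanishing
      have hζη : (q:K)^((r:ℤ)-j) * (q:K)^((r:ℤ)+j) ≠ 1 := by
        rw [hA]; exact hxq (2*r) (by omega)
      have hζ : (q:K)^((r:ℤ)-j) ≠ 1 := q_zpow_ne_one _ (by omega)
      have e5' : (1 - (q:K)^((r:ℤ)-j) * (q:K)^((r:ℤ)+j)) * qBinom ((q:K)^2) (((r+t:ℕ):ℤ)-1) (r:ℤ)
          = (1 - (q:K)^(2*t)) * qBinom ((q:K)^2) (((r+t:ℕ):ℤ)-1) ((r:ℤ)-1) := by
        rw [hA]; exact e5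
      have hkey := key (q:K) ((q:K)^((r:ℤ)-j)) ((q:K)^((r:ℤ)+j)) ((q:K)^(2*t))
        (qBinom ((q:K)^2) (((r+t:ℕ):ℤ)-1) (r:ℤ))
        (qBinom ((q:K)^2) (((r+t:ℕ):ℤ)-1) ((r:ℤ)-1))
        (qBinom q (2*(r:ℤ)-1) ((r:ℤ)-j))
        (qBinom q (2*(r:ℤ)-1) ((r:ℤ)-j-1))
        (qBinom q (2*(r:ℤ)) ((r:ℤ)-j-1))
        hζη hζ e5' e6
      have hT : (q:K)^(2*(r+t)) = (q:K)^(2*t)*((q:K)^((r:ℤ)-j)*(q:K)^((r:ℤ)+j)) := by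
        rw [hA]; ring
      rw [hT]
      linear_combination hkey
        + (((q:K)^(2*t) - 1) * qBinom q (2*(r:ℤ)) ((r:ℤ)-j-1)
            + ((q:K)^((r:ℤ)-j) * (q:K)^(2*t) * (1+q) - 1 - (q:K)^(2*t)*q) *
              qBinom q (2*(r:ℤ)) ((r:ℤ)-j)) * h3
        + ((1 - (q:K)^(2*t)*((q:K)^((r:ℤ)-j)*(q:K)^((r:ℤ)+j))) *
            qBinom ((q:K)^2) (((r+t:ℕ):ℤ)-1) (r:ℤ)) * h2
        + (((q:K)^(2*t) * qBinom ((q:K)^2) (((r+t:ℕ):ℤ)-1) ((r:ℤ)-1)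
              + qBinom ((q:K)^2) (((r+t:ℕ):ℤ)-1) (r:ℤ)) *
            ((q:K)^((r:ℤ)-j) * (q:K)^(2*t) * (1+q) - 1 - (q:K)^(2*t)*q)
           + (1 - (q:K)^(2*t)*((q:K)^((r:ℤ)-j)*(q:K)^((r:ℤ)+j))) *
              qBinom ((q:K)^2) (((r+t:ℕ):ℤ)-1) (r:ℤ) * (q:K)^((r:ℤ)-j)) * h4

def fS (L : ℕ) (j : ℤ) (r : ℕ) : K :=
  (-1:K)^(r+L) * qPoch (-q) ((q:K)^2) (L-r) * qBinom ((q:K)^2) (L:ℤ) (r:ℤ) *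
    qBinom q (2*(r:ℤ)) ((r:ℤ)-j)

def Gtel (L : ℕ) (j : ℤ) (k : ℕ) : K :=
  (-1:K)^(k+L) * (1 - (q:K)^(2*L)) * qPoch (-q) ((q:K)^2) (L+1-k) *
    qBinom ((q:K)^2) ((L:ℤ)-1) ((k:ℤ)-1) * qBinom q (2*(k:ℤ)-1) ((k:ℤ)-j-1)

def fA (L : ℕ) (j : ℤ) (r : ℕ) : K :=
  (-1:K)^(r+(L+1)) * qPoch (-q) ((q:K)^2) (L+1-r) *
    (((q:K)^2)^((L:ℤ)+1-(r:ℤ)) * qBinom ((q:K)^2) (L:ℤ) ((r:ℤ)-1)) *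
    qBinom q (2*(r:ℤ)) ((r:ℤ)-j)

def fC (L : ℕ) (j : ℤ) (r : ℕ) : K :=
  (-1:K)^(r+(L+1)) * qPoch (-q) ((q:K)^2) (L+1-r) * qBinom ((q:K)^2) (L:ℤ) (r:ℤ) *
    qBinom q (2*(r:ℤ)) ((r:ℤ)-j)

lemma pointwise (L r : ℕ) (hr : r ≤ L) (j : ℤ) :
    fA L j (r+1) + fC L j r
      = (q:K)^(2*((L:ℤ)+1-j)) * fS L (j-1) r + fS L (j+1) r +
          (Gtel L j (r+1) - Gtel L j r) := by
  have hLI := LI L r hr j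
  have hq1 : (q:K)^((r:ℤ)+1-j) = q * (q:K)^((r:ℤ)-j) := by
    rw [show (r:ℤ)+1-j = 1+((r:ℤ)-j) by ring, zpow_add₀ hq0, zpow_one]
  have hZ : (q:K)^(2*((L:ℤ)+1-j))
      = (q:K)^(2*(L-r)) * ((q:K)^((r:ℤ)+1-j) * (q:K)^((r:ℤ)+1-j)) := by
    rw [← zpow_natCast q (2*(L-r)), ← zpow_add₀ hq0, ← zpow_add₀ hq0]
    congr 1
    omega
  have hA2 := pascal1 q hxq (2*r+1) ((r:ℤ)+1-j)
  push_cast at hA2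
  rw [show 2*(r:ℤ)+1+1 = 2*(r:ℤ)+2 by ring] at hA2
  rw [show (r:ℤ)+1-j-1 = (r:ℤ)-j by ring] at hA2
  have hB2 := pascal1 q hxq (2*r) ((r:ℤ)-j)
  push_cast at hB2
  have hC2 := pascal1 q hxq (2*r) ((r:ℤ)+1-j)
  push_cast at hC2
  rw [show (r:ℤ)+1-j-1 = (r:ℤ)-j by ring] at hC2
  unfold fA fC fS Gtel
  rw [show (r:ℤ)-(j-1) = (r:ℤ)+1-j by ring,
    show (r:ℤ)-(j+1) = (r:ℤ)-j-1 by ring,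
    show L+1-(r+1) = L-r by omega,
    show ((r+1:ℕ):ℤ) = (r:ℤ)+1 by push_cast; ring,
    show (r:ℤ)+1-1 = (r:ℤ) by ring,
    show 2*((r:ℤ)+1) = 2*(r:ℤ)+2 by ring,
    show 2*(r:ℤ)+2-1 = 2*(r:ℤ)+1 by ring,
    show (r:ℤ)+1-j-1 = (r:ℤ)-j by ring,
    show r+1+(L+1) = r+L+2 by omega,
    show r+(L+1) = r+L+1 by omega,
    show r+1+L = r+L+1 by omega,
    show (L:ℤ)+1-((r:ℤ)+1) = ((L-r:ℕ):ℤ) by omega,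
    zpow_natCast,
    show L+1-r = (L-r)+1 by omega,
    qPoch_succ, ← pow_mul, hZ]
  linear_combination
    ((-1:K)^(r+L) * qPoch (-q) ((q:K)^2) (L-r)) * hLI
    + ((-1:K)^(r+L) * qPoch (-q) ((q:K)^2) (L-r) * (q:K)^(2*(L-r)) *
        qBinom ((q:K)^2) (L:ℤ) (r:ℤ)) * hA2
    + ((-1:K)^(r+L) * qPoch (-q) ((q:K)^2) (L-r) * (q:K)^(2*(L-r)) *
        qBinom ((q:K)^2) (L:ℤ) (r:ℤ)) * hB2
    + ((-1:K)^(r+L) * qPoch (-q) ((q:K)^2) (L-r) * (q:K)^(2*(L-r)) *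
        qBinom ((q:K)^2) (L:ℤ) (r:ℤ) * (q:K)^((r:ℤ)+1-j)) * hC2
    + ((-1:K)^(r+L) * qPoch (-q) ((q:K)^2) (L-r) * (q:K)^(2*(L-r)) *
        qBinom ((q:K)^2) (L:ℤ) (r:ℤ) * qBinom q (2*(r:ℤ)) ((r:ℤ)-j)) * hq1

lemma hA0 (L : ℕ) (j : ℤ) : fA L j 0 = 0 := by
  unfold fA
  rw [qBinom_neg ((q:K)^2) _ (by norm_num : ((0:ℕ):ℤ)-1 < 0)]
  ring

lemma hCL1 (L : ℕ) (j : ℤ) : fC L j (L+1) = 0 := by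
  unfold fC
  rw [qBinom_gt ((q:K)^2) (show (L:ℤ) < ((L+1:ℕ):ℤ) by exact_mod_cast Nat.lt_succ_self L)]
  ring

lemma hG0 (L : ℕ) (j : ℤ) : Gtel L j 0 = 0 := by
  unfold Gtel
  rw [qBinom_neg ((q:K)^2) _ (by norm_num : ((0:ℕ):ℤ)-1 < 0)]
  ring

lemma hG1 (L : ℕ) (j : ℤ) : Gtel L j (L+1) = 0 := by
  unfold Gtel
  rw [qBinom_gt ((q:K)^2) (show (L:ℤ)-1 < ((L+1:ℕ):ℤ)-1 by push_cast; omega)]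
  ring

lemma step (L : ℕ) (j : ℤ) :
    (∑ r ∈ Finset.range (L+1+1), fS (L+1) j r)
      = (q:K)^(2*((L:ℤ)+1-j)) * (∑ r ∈ Finset.range (L+1), fS L (j-1) r)
        + ∑ r ∈ Finset.range (L+1), fS L (j+1) r := by
  have h1 : ∀ r ∈ Finset.range (L+1+1), fS (L+1) j r = fA L j r + fC L j r := by
    intro r _
    unfold fS fA fC
    rw [show ((L+1:ℕ):ℤ) = (L:ℤ)+1 by push_cast; ring, pascal2 ((q:K)^2) hx2 L (r:ℤ)]
    ring
  have hmain : ∀ r ∈ Finset.range (L+1),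
      fA L j (r+1) + fC L j r
        = (q:K)^(2*((L:ℤ)+1-j)) * fS L (j-1) r + fS L (j+1) r +
            (Gtel L j (r+1) - Gtel L j r) := by
    intro r hr
    exact pointwise L r (by simpa [Nat.lt_succ_iff] using Finset.mem_range.mp hr) j
  calc (∑ r ∈ Finset.range (L+1+1), fS (L+1) j r)
      = ∑ r ∈ Finset.range (L+1+1), (fA L j r + fC L j r) := Finset.sum_congr rfl h1
    _ = (∑ r ∈ Finset.range (L+1+1), fA L j r) + ∑ r ∈ Finset.range (L+1+1), fC L j r :=
        Finset.sum_add_distrib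
    _ = ((∑ r ∈ Finset.range (L+1), fA L j (r+1)) + fA L j 0)
          + ((∑ r ∈ Finset.range (L+1), fC L j r) + fC L j (L+1)) := by
        rw [Finset.sum_range_succ' (fA L j) (L+1), Finset.sum_range_succ (fC L j) (L+1)]
    _ = ∑ r ∈ Finset.range (L+1), (fA L j (r+1) + fC L j r) := by
        rw [hA0, hCL1, add_zero, add_zero, ← Finset.sum_add_distrib]
    _ = ∑ r ∈ Finset.range (L+1),
          ((q:K)^(2*((L:ℤ)+1-j)) * fS L (j-1) r + fS L (j+1) r +
            (Gtel L j (r+1) - Gtel L j r)) := Finset.sum_congr rfl hmain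
    _ = (∑ r ∈ Finset.range (L+1), ((q:K)^(2*((L:ℤ)+1-j)) * fS L (j-1) r + fS L (j+1) r))
          + ∑ r ∈ Finset.range (L+1), (Gtel L j (r+1) - Gtel L j r) := Finset.sum_add_distrib
    _ = ((∑ r ∈ Finset.range (L+1), (q:K)^(2*((L:ℤ)+1-j)) * fS L (j-1) r)
          + ∑ r ∈ Finset.range (L+1), fS L (j+1) r)
          + (Gtel L j (L+1) - Gtel L j 0) := by
        rw [Finset.sum_add_distrib, Finset.sum_range_sub (Gtel L j)]
    _ = (q:K)^(2*((L:ℤ)+1-j)) * (∑ r ∈ Finset.range (L+1), fS L (j-1) r)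
        + ∑ r ∈ Finset.range (L+1), fS L (j+1) r := by
        rw [hG1, hG0, ← Finset.mul_sum]
        ring

lemma rhs_step (L : ℕ) (j : ℤ) :
    qBinom ((q:K)^4) ((L+1:ℕ):ℤ) ((((L+1:ℕ):ℤ)-j)/2) *
        (if ((L+1:ℕ):ℤ) % 2 = j % 2 then (1:K) else 0)
      = (q:K)^(2*((L:ℤ)+1-j)) *
          (qBinom ((q:K)^4) (L:ℤ) (((L:ℤ)-(j-1))/2) *
            (if (L:ℤ) % 2 = (j-1) % 2 then (1:K) else 0))
        + qBinom ((q:K)^4) (L:ℤ) (((L:ℤ)-(j+1))/2) *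
            (if (L:ℤ) % 2 = (j+1) % 2 then (1:K) else 0) := by
  by_cases hpar : ((L+1:ℕ):ℤ) % 2 = j % 2
  · rw [if_pos hpar, if_pos (by omega : (L:ℤ) % 2 = (j-1) % 2),
      if_pos (by omega : (L:ℤ) % 2 = (j+1) % 2)]
    obtain ⟨k, hk⟩ : ∃ k : ℤ, (L:ℤ)+1-j = 2*k := ⟨((L:ℤ)+1-j)/2, by omega⟩
    rw [show (((L+1:ℕ):ℤ)-j)/2 = k by omega,
      show ((L:ℤ)-(j-1))/2 = k by omega,
      show ((L:ℤ)-(j+1))/2 = k-1 by omega,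
      show ((L+1:ℕ):ℤ) = (L:ℤ)+1 by push_cast; ring]
    have hp := pascal1 ((q:K)^4) hx4 L k
    have hc : (q:K)^(2*((L:ℤ)+1-j)) = ((q:K)^4)^(k:ℤ) := by
      rw [show (2*((L:ℤ)+1-j)) = (4:ℤ)*k by omega, zpow_mul,
        show ((4:ℤ)) = ((4:ℕ):ℤ) by norm_num, zpow_natCast]
    rw [hp, hc]
    ring
  · rw [if_neg hpar, if_neg (by omega : ¬ ((L:ℤ) % 2 = (j-1) % 2)),
      if_neg (by omega : ¬ ((L:ℤ) % 2 = (j+1) % 2))]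
    ring

theorem stmt14 (L : ℕ) (j : ℤ) :
    ∑ r ∈ Finset.range (L + 1),
      (-1 : RatFunc ℚ) ^ (r + L) * qPoch (-q) (q ^ 2) (L - r) *
        qBinom (q ^ 2) (L : ℤ) (r : ℤ) * qBinom q (2 * r : ℤ) ((r : ℤ) - j)
    = qBinom (q ^ 4) (L : ℤ) (((L : ℤ) - j) / 2) *
        (if (L : ℤ) % 2 = j % 2 then 1 else 0) := by
  induction L generalizing j with
  | zero =>
    rw [Finset.sum_range_one]
    simp only [Nat.cast_zero, Nat.sub_zero, pow_zero, Nat.mul_zero, mul_zero, zero_sub, zero_mul,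
      one_mul, Nat.zero_sub]
    rw [qPoch_zero, qBinom_zero ((q:K)^2) hx2 0 le_rfl]
    rcases eq_or_ne j 0 with hj | hj
    · subst hj
      norm_num
      rw [qBinom_zero q hxq 0 le_rfl, qBinom_zero ((q:K)^4) hx4 0 le_rfl]
    · have hL : qBinom q (0:ℤ) (-j) = 0 := by
        rcases lt_or_gt_of_ne hj with h | h
        · exact qBinom_gt q (by omega)
        · exact qBinom_neg q _ (by omega)
      rw [hL]
      by_cases hpar : (0:ℤ) % 2 = j % 2
      · rw [if_pos hpar]
        have : qBinom ((q:K)^4) (0:ℤ) (-j/2) = 0 := by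
          rcases lt_or_gt_of_ne hj with h | h
          · exact qBinom_gt _ (by omega)
          · exact qBinom_neg _ _ (by omega)
        rw [this]
        ring
      · rw [if_neg hpar]
        ring
  | succ L ih =>
    have hstep := step L j
    have hconv : (∑ r ∈ Finset.range (L+1+1), fS (L+1) j r)
        = ∑ r ∈ Finset.range (L+1+1),
            (-1 : RatFunc ℚ) ^ (r + (L+1)) * qPoch (-q) (q ^ 2) (L+1 - r) *
              qBinom (q ^ 2) ((L+1 : ℕ) : ℤ) (r : ℤ) * qBinom q (2 * r : ℤ) ((r : ℤ) - j) := rfl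
    have hconvm : (∑ r ∈ Finset.range (L+1), fS L (j-1) r)
        = ∑ r ∈ Finset.range (L+1),
            (-1 : RatFunc ℚ) ^ (r + L) * qPoch (-q) (q ^ 2) (L - r) *
              qBinom (q ^ 2) ((L : ℕ) : ℤ) (r : ℤ) * qBinom q (2 * r : ℤ) ((r : ℤ) - (j-1)) := rfl
    have hconvp : (∑ r ∈ Finset.range (L+1), fS L (j+1) r)
        = ∑ r ∈ Finset.range (L+1),
            (-1 : RatFunc ℚ) ^ (r + L) * qPoch (-q) (q ^ 2) (L - r) *
              qBinom (q ^ 2) ((L : ℕ) : ℤ) (r : ℤ) * qBinom q (2 * r : ℤ) ((r : ℤ) - (j+1)) := rfl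
    rw [← hconv, hstep, hconvm, hconvp, ih (j-1), ih (j+1)]
    exact (rhs_step L j).symm
end
end
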